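/- If G satisfies |E(G')| ≤ ℓ·|V(G')| for every induced subgraph G' of G, then for any connected subgraph T of G, DegCost(T) ≤ 2ℓ · Cost(T). -/

import Mathlib

open Finset

/-- The closed neighborhood (as a set) of a set `S` of vertices. -/
def setNbhd {V : Type*} (G : SimpleGraph V) (S : Set V) : Set V :=
  S ∪ {v | ∃ u ∈ S, G.Adj u v}

/-- If `G` has the hereditary density property (every induced subgraph `G'` satisfies
`|E(G')| ≤ ℓ·|V(G')|`), then for any connected subgraph `T` of `G`,
`DegCost(T) ≤ 2ℓ · Cost(T)`. -/
theorem degCost_le_of_hereditary_density {V : Type*} [Fintype V]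
    (G : SimpleGraph V) [DecidableRel G.Adj] (ℓ : ℝ) (hℓ : 0 ≤ ℓ)
    (hdens : ∀ S : Set V,
      (({e ∈ G.edgeSet | ∀ v ∈ e, v ∈ S}).ncard : ℝ) ≤ ℓ * (S.ncard : ℝ))
    (T : G.Subgraph) (hT : T.Connected) :
    (∑ᶠ u ∈ T.verts, (G.degree u : ℝ)) ≤ 2 * ℓ * ((setNbhd G T.verts).ncard : ℝ) := by
  classical
  set S : Set V := setNbhd G T.verts with hS
  -- the spanning subgraph with only edges inside S
  let G' : SimpleGraph V :=
    { Adj := fun u v => G.Adj u v ∧ u ∈ S ∧ v ∈ S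
      symm := by
        refine ⟨fun u v h => ?_⟩
        exact ⟨h.1.symm, h.2.2, h.2.1⟩
      loopless := by
        refine ⟨fun u h => ?_⟩
        exact G.loopless.irrefl u h.1 }
  have hadj : ∀ u v, G'.Adj u v ↔ G.Adj u v ∧ u ∈ S ∧ v ∈ S := fun _ _ => Iff.rfl
  haveI : DecidableRel G'.Adj := fun u v => by
    simp only [hadj]; exact instDecidableAnd
  -- edge sets match
  have hedge : G'.edgeSet = {e ∈ G.edgeSet | ∀ v ∈ e, v ∈ S} := by
    ext e
    induction e using Sym2.ind with
    | _ u v =>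
      simp only [SimpleGraph.mem_edgeSet, hadj, Set.mem_setOf_eq, Sym2.mem_iff]
      constructor
      · rintro ⟨h, hu, hv⟩
        exact ⟨h, fun w hw => by rcases hw with rfl | rfl <;> assumption⟩
      · rintro ⟨h, hmem⟩
        exact ⟨h, hmem u (Or.inl rfl), hmem v (Or.inr rfl)⟩
  -- degree equality on T.verts
  have hdeg : ∀ u ∈ T.verts, G'.degree u = G.degree u := by
    intro u hu
    have : G'.neighborFinset u = G.neighborFinset u := by
      ext v
      simp only [SimpleGraph.mem_neighborFinset, hadj]
      constructor
      · exact fun h => h.1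
      · intro h
        refine ⟨h, Or.inl hu, Or.inr ⟨u, hu, h⟩⟩
    unfold SimpleGraph.degree
    rw [this]
  -- finsum to finset sum
  have hTfin : T.verts.Finite := Set.toFinite _
  have hsum : (∑ᶠ u ∈ T.verts, (G.degree u : ℝ))
      = ∑ u ∈ hTfin.toFinset, (G.degree u : ℝ) := by
    have h := finsum_mem_coe_finset (s := hTfin.toFinset) (f := fun u => (G.degree u : ℝ))
    rw [hTfin.coe_toFinset] at h
    exact h
  rw [hsum]
  have hstep1 : ∑ u ∈ hTfin.toFinset, (G.degree u : ℝ)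
      ≤ ∑ u ∈ Finset.univ, (G'.degree u : ℝ) := by
    rw [show (∑ u ∈ hTfin.toFinset, (G.degree u : ℝ))
        = ∑ u ∈ hTfin.toFinset, (G'.degree u : ℝ) from
      Finset.sum_congr rfl (fun u hu => by
        rw [hdeg u (hTfin.mem_toFinset.mp hu)])]
    exact Finset.sum_le_sum_of_subset_of_nonneg (Finset.subset_univ _)
      (fun i _ _ => by positivity)
  have hhand : (∑ u ∈ Finset.univ, (G'.degree u : ℝ)) = 2 * G'.edgeFinset.card := by
    rw [← Nat.cast_sum]
    rw [SimpleGraph.sum_degrees_eq_twice_card_edges]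
    push_cast
    ring
  have hcard : (G'.edgeFinset.card : ℝ) ≤ ℓ * (S.ncard : ℝ) := by
    have := hdens S
    rwa [← hedge, ← SimpleGraph.coe_edgeFinset, Set.ncard_coe_finset] at this
  calc ∑ u ∈ hTfin.toFinset, (G.degree u : ℝ)
      ≤ ∑ u ∈ Finset.univ, (G'.degree u : ℝ) := hstep1
    _ = 2 * G'.edgeFinset.card := hhand
    _ ≤ 2 * (ℓ * (S.ncard : ℝ)) := by linarith
    _ = 2 * ℓ * (S.ncard : ℝ) := by ring
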